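/- The set of rational numbers of the form min(x, y, z, (x+y+z)/4) as (x,y,z) ranges over all triples of positive integers is exactly {3/4, 1} ∪ {k/4 : k ∈ ℤ, k ≥ 6}. In particular 3/4 and 3/2 belong to this set but 5/4 does not. -/
import Mathlib


/-- The set of values `min(x, y, z, (x+y+z)/4)` over positive integer triples. -/
def S₉ : Set ℚ :=
  {q : ℚ | ∃ x y z : ℤ, 0 < x ∧ 0 < y ∧ 0 < z ∧
    q = min (x : ℚ) (min (y : ℚ) (min (z : ℚ) (((x : ℚ) + y + z) / 4)))}

theorem stmt_9 :
    S₉ = {3/4, 1} ∪ {q : ℚ | ∃ k : ℤ, 6 ≤ k ∧ q = (k : ℚ) / 4} ∧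
    (3/4 : ℚ) ∈ S₉ ∧ (3/2 : ℚ) ∈ S₉ ∧ (5/4 : ℚ) ∉ S₉ := by
  have key : S₉ = {3/4, 1} ∪ {q : ℚ | ∃ k : ℤ, 6 ≤ k ∧ q = (k : ℚ) / 4} := by
    ext q
    constructor
    · rintro ⟨x, y, z, hx, hy, hz, rfl⟩
      have hxm : min x (min y z) ≤ x := min_le_left _ _
      have hym : min x (min y z) ≤ y := le_trans (min_le_right _ _) (min_le_left _ _)
      have hzm : min x (min y z) ≤ z := le_trans (min_le_right _ _) (min_le_right _ _)
      have hM1 : 1 ≤ min x (min y z) := le_min (by omega) (le_min (by omega) (by omega))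
      rcases le_or_gt (x + y + z) (4 * min x (min y z)) with h | h
      · -- value is (x+y+z)/4
        have h4x : ((x : ℚ) + y + z) / 4 ≤ (x : ℚ) := by
          rw [div_le_iff₀ (by norm_num : (0:ℚ) < 4)]
          exact_mod_cast (by omega : x + y + z ≤ x * 4)
        have h4y : ((x : ℚ) + y + z) / 4 ≤ (y : ℚ) := by
          rw [div_le_iff₀ (by norm_num : (0:ℚ) < 4)]
          exact_mod_cast (by omega : x + y + z ≤ y * 4)
        have h4z : ((x : ℚ) + y + z) / 4 ≤ (z : ℚ) := by
          rw [div_le_iff₀ (by norm_num : (0:ℚ) < 4)]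
          exact_mod_cast (by omega : x + y + z ≤ z * 4)
        have hq : min (x:ℚ) (min (y:ℚ) (min (z:ℚ) (((x:ℚ) + y + z) / 4)))
            = ((x:ℚ) + y + z) / 4 := by
          rw [min_eq_right h4z, min_eq_right h4y, min_eq_right h4x]
        rcases le_or_gt 6 (x + y + z) with h6 | h6
        · right
          exact ⟨x + y + z, h6, by rw [hq]; push_cast; ring⟩
        · -- x+y+z ∈ {3,4}; the case 5 is impossible
          have h34 : x + y + z = 3 ∨ x + y + z = 4 := by omega
          left
          rcases h34 with h3 | h4
          · have : ((x:ℚ) + y + z) = 3 := by exact_mod_cast h3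
            left; rw [hq, this]
          · have : ((x:ℚ) + y + z) = 4 := by exact_mod_cast h4
            right; rw [hq, this]; norm_num
      · -- value is min x (min y z)
        have h' : 4 * min (x:ℚ) (min (y:ℚ) (z:ℚ)) < (x:ℚ) + y + z := by
          exact_mod_cast h
        have hle : min (x:ℚ) (min (y:ℚ) (z:ℚ)) ≤ ((x:ℚ) + y + z) / 4 := by
          linarith
        have hmin : min (x:ℚ) (min (y:ℚ) (min (z:ℚ) (((x:ℚ) + y + z) / 4)))
            = min (x:ℚ) (min (y:ℚ) (z:ℚ)) := by
          apply le_antisymm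
          · exact min_le_min le_rfl (min_le_min le_rfl (min_le_left _ _))
          · refine le_min (min_le_left _ _) (le_min ?_ (le_min ?_ hle))
            · exact le_trans (min_le_right _ _) (min_le_left _ _)
            · exact le_trans (min_le_right _ _) (min_le_right _ _)
        have hcast : min (x:ℚ) (min (y:ℚ) (z:ℚ)) = ((min x (min y z) : ℤ) : ℚ) := by
          push_cast; rfl
        rcases (by omega : min x (min y z) = 1 ∨ 2 ≤ min x (min y z)) with h1 | h2
        · left; right
          rw [hmin, hcast, h1]
          norm_num
        · right
          refine ⟨4 * min x (min y z), by omega, ?_⟩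
          rw [hmin, hcast]
          push_cast
          ring
    · rintro (h | ⟨k, hk, rfl⟩)
      · rcases h with h | h
        · refine ⟨1, 1, 1, one_pos, one_pos, one_pos, ?_⟩
          rw [h]; norm_num [min_def]
        · simp only [Set.mem_singleton_iff] at h
          refine ⟨1, 1, 2, one_pos, one_pos, two_pos, ?_⟩
          rw [h]; norm_num [min_def]
      · refine ⟨(k + 3) / 4, (k + 3) / 4, k - 2 * ((k + 3) / 4), by omega, by omega, by omega, ?_⟩
        set x : ℤ := (k + 3) / 4 with hxdef
        set z : ℤ := k - 2 * ((k + 3) / 4) with hzdef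
        have hsum : (x:ℚ) + x + z = (k:ℚ) := by
          have : x + x + z = k := by omega
          exact_mod_cast this
        have hdx : (k:ℚ) / 4 ≤ (x:ℚ) := by
          rw [div_le_iff₀ (by norm_num : (0:ℚ) < 4)]
          exact_mod_cast (by omega : k ≤ x * 4)
        have hdz : (k:ℚ) / 4 ≤ (z:ℚ) := by
          rw [div_le_iff₀ (by norm_num : (0:ℚ) < 4)]
          exact_mod_cast (by omega : k ≤ z * 4)
        rw [hsum, min_eq_right hdz, min_eq_right hdx, min_eq_right hdx]
  refine ⟨key, ?_, ?_, ?_⟩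
  · exact ⟨1, 1, 1, one_pos, one_pos, one_pos, by norm_num [min_def]⟩
  · exact ⟨2, 2, 2, two_pos, two_pos, two_pos, by norm_num [min_def]⟩
  · rw [key]
    rintro ((h | h) | ⟨k, hk, hke⟩)
    · norm_num at h
    · norm_num at h
    · have : (k : ℚ) = 5 := by linarith
      have : k = 5 := by exact_mod_cast this
      omega
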